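/- arXiv:math/0304171 — 2 statements merged into one kernel-verified Lean document; each statement's English description precedes it below -/
import Mathlib

section
/- Every Plott function f on a finite set X equals the join of all linear Plott functions below it: f(A) = ⋃{ l(A) : l a linear Plott function on X with l(B) ⊆ f(B) for all B ⊆ X } for every A ⊆ X. -/
open Set

variable {X Y Z : Type*}

/-- A choice function: `f A ⊆ A` for all `A`. -/
def IsChoice (f : Set X → Set X) : Prop := ∀ A, f A ⊆ A

/-- A Plott function: choice function satisfying path independence. -/
def IsPlott (f : Set X → Set X) : Prop :=
  IsChoice f ∧ ∀ A B : Set X, f (A ∪ B) = f (f A ∪ B)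

open Classical in
/-- First element of the list that belongs to the set. -/
noncomputable def firstIn : List X → Set X → Option X
  | [], _ => none
  | a :: L, B => if a ∈ B then some a else firstIn L B

/-- The linear choice function associated to a priority list. -/
noncomputable def linOf (L : List X) : Set X → Set X :=
  fun B => {y | firstIn L B = some y}

lemma firstIn_cons_of_mem {a : X} {B : Set X} (L : List X) (h : a ∈ B) :
    firstIn (a :: L) B = some a := by
  simp [firstIn, h]

lemma firstIn_cons_of_not_mem {a : X} {B : Set X} (L : List X) (h : a ∉ B) :
    firstIn (a :: L) B = firstIn L B := by
  simp [firstIn, h]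

lemma firstIn_mem {L : List X} {B : Set X} {y : X} (h : firstIn L B = some y) : y ∈ B := by
  induction L with
  | nil => simp [firstIn] at h
  | cons a L ih =>
    by_cases ha : a ∈ B
    · rw [firstIn_cons_of_mem L ha] at h
      exact Option.some.inj h ▸ ha
    · rw [firstIn_cons_of_not_mem L ha] at h
      exact ih h

lemma firstIn_pi (L : List X) (A B : Set X) :
    firstIn L (A ∪ B) = firstIn L (linOf L A ∪ B) := by
  induction L with
  | nil => rfl
  | cons a L ih =>
    by_cases hA : a ∈ A
    · have hlin : a ∈ linOf (a :: L) A := by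
        show firstIn (a :: L) A = some a
        exact firstIn_cons_of_mem L hA
      rw [firstIn_cons_of_mem L (Or.inl hA : a ∈ A ∪ B),
        firstIn_cons_of_mem L (Or.inl hlin : a ∈ linOf (a :: L) A ∪ B)]
    · have hlin : linOf (a :: L) A = linOf L A := by
        ext y
        show firstIn (a :: L) A = some y ↔ firstIn L A = some y
        rw [firstIn_cons_of_not_mem L hA]
      rw [hlin]
      by_cases hB : a ∈ B
      · rw [firstIn_cons_of_mem L (Or.inr hB : a ∈ A ∪ B),
          firstIn_cons_of_mem L (Or.inr hB : a ∈ linOf L A ∪ B)]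
      · have hnotAB : a ∉ A ∪ B := by
          rintro (h | h) <;> [exact hA h; exact hB h]
        have hnotlin : a ∉ linOf L A ∪ B := by
          rintro (h | h)
          · exact hA (firstIn_mem h)
          · exact hB h
        rw [firstIn_cons_of_not_mem L hnotAB, firstIn_cons_of_not_mem L hnotlin]
        exact ih

lemma linOf_plott (L : List X) : IsPlott (linOf L) :=
  ⟨fun _ _ hy => firstIn_mem hy,
   fun A B => congrArg (fun o : Option X => {y | o = some y}) (firstIn_pi L A B)⟩

lemma linOf_card (L : List X) (B : Set X) : (linOf L B).ncard ≤ 1 := by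
  cases h : firstIn L B with
  | none =>
    have : linOf L B = ∅ := by ext y; simp [linOf, h]
    simp [this]
  | some a =>
    have : linOf L B = {a} := by
      ext y; simp only [linOf, mem_setOf_eq, h, Option.some.injEq, mem_singleton_iff, eq_comm]
    simp [this]

lemma plott_heritage {f : Set X → Set X} (hf : IsPlott f) {A B : Set X} (hBA : B ⊆ A)
    {x : X} (hx : x ∈ f A) (hxB : x ∈ B) : x ∈ f B := by
  have h1 : f A = f (f B ∪ (A \ B)) := by
    rw [← hf.2, union_diff_cancel hBA]
  have h2 : x ∈ f B ∪ (A \ B) := hf.1 _ (h1 ▸ hx)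
  rcases h2 with h | h
  · exact h
  · exact absurd hxB h.2

lemma plott_outcast {f : Set X → Set X} (hf : IsPlott f) {A D : Set X}
    (h1 : f D ⊆ A) (h2 : A ⊆ D) : f A = f D := by
  have h := hf.2 D A
  rw [union_eq_left.mpr h2, union_eq_right.mpr h1] at h
  exact h.symm

/-- `L` is a valid greedy sequence starting from remaining set `D`. -/
def GoodFrom (f : Set X → Set X) : Set X → List X → Prop
  | _, [] => True
  | D, a :: L => a ∈ f D ∧ GoodFrom f (D \ {a}) L

lemma good_sub {f : Set X → Set X} (hf : IsPlott f) :
    ∀ (L : List X) (D : Set X), GoodFrom f D L → ∀ B ⊆ D, linOf L B ⊆ f B := by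
  intro L
  induction L with
  | nil => intro D _ B _ y hy; simp [linOf, firstIn] at hy
  | cons a L ih =>
    intro D hG B hBD y hy
    by_cases ha : a ∈ B
    · have hya : y = a := by
        simp only [linOf, mem_setOf_eq, firstIn, if_pos ha, Option.some.injEq] at hy
        exact hy.symm
      subst hya
      exact plott_heritage hf hBD hG.1 ha
    · have hy' : y ∈ linOf L B := by
        simpa only [linOf, mem_setOf_eq, firstIn, if_neg ha] using hy
      exact ih (D \ {a}) hG.2 B (subset_diff_singleton hBD ha) hy'

lemma exists_good {X : Type*} [Fintype X] {f : Set X → Set X} (hf : IsPlott f) :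
    ∀ n (D A : Set X), D.ncard ≤ n → A ⊆ D → ∀ x ∈ f A,
      ∃ L, GoodFrom f D L ∧ firstIn L A = some x := by
  intro n
  induction n with
  | zero =>
    intro D A hD hAD x hx
    have hD0 : D = ∅ := (Set.ncard_eq_zero (Set.toFinite D)).mp (Nat.le_zero.mp hD)
    have hA0 : A = ∅ := subset_empty_iff.mp (hD0 ▸ hAD)
    exact absurd (hf.1 ∅ (hA0 ▸ hx)) (notMem_empty x)
  | succ n ih =>
    intro D A hD hAD x hx
    by_cases hcase : f D ⊆ A
    · have hfA : f A = f D := plott_outcast hf hcase hAD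
      refine ⟨[x], ⟨hfA ▸ hx, trivial⟩, ?_⟩
      have hxA : x ∈ A := hf.1 A hx
      exact firstIn_cons_of_mem [] hxA
    · rw [Set.not_subset] at hcase
      obtain ⟨a, haf, haA⟩ := hcase
      have haD : a ∈ D := hf.1 D haf
      have hlt : (D \ {a}).ncard < D.ncard :=
        Set.ncard_diff_singleton_lt_of_mem haD (Set.toFinite D)
      have hle : (D \ {a}).ncard ≤ n := by omega
      obtain ⟨L, hG, hfi⟩ := ih (D \ {a}) A hle (subset_diff_singleton hAD haA) x hx
      exact ⟨a :: L, ⟨haf, hG⟩, by rw [firstIn_cons_of_not_mem L haA]; exact hfi⟩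

/-- every Plott function is the join of the linear Plott functions below it. -/
theorem plott_eq_join_of_basement {X : Type*} [Fintype X]
    (f : Set X → Set X) (hf : IsPlott f) :
    ∀ A : Set X, f A =
      {x | ∃ l : Set X → Set X, IsPlott l ∧ (∀ B : Set X, (l B).ncard ≤ 1) ∧
        (∀ B : Set X, l B ⊆ f B) ∧ x ∈ l A} := by
  intro A
  ext x
  simp only [mem_setOf_eq]
  constructor
  · intro hx
    obtain ⟨L, hG, hfi⟩ :=
      exists_good hf (Set.univ : Set X).ncard Set.univ A le_rfl (subset_univ A) x hx
    refine ⟨linOf L, linOf_plott L, linOf_card L, ?_, hfi⟩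
    intro B
    exact good_sub hf L Set.univ hG B (subset_univ B)
  · rintro ⟨l, _, _, hl, hx⟩
    exact hl A hx
end

section
/- The direct image of a convex geometry under the full-image operation is a convex geometry: if φ: X → Y is a map of finite sets and F is a convex geometry on X, then F_Y = { φ_+(F) : F ∈ F }, where φ_+(A) = {y ∈ Y : φ^{-1}(y) ⊆ A}, is a convex geometry on Y; moreover ext_{F_Y}(B) = φ(ext_F(φ^{-1}(B))) for all B ⊆ Y. -/
open Set

variable {X Y Z : Type*}

/-- Closure in a family of sets: intersection of all members containing `A`. -/
def closureOf (𝓕 : Set (Set X)) (A : Set X) : Set X := ⋂₀ {F | F ∈ 𝓕 ∧ A ⊆ F}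

/-- Extreme points of `A` with respect to the closure system `𝓕`. -/
def extPts (𝓕 : Set (Set X)) (A : Set X) : Set X :=
  {a ∈ A | a ∉ closureOf 𝓕 (A \ {a})}

/-- Convex geometry: contains `univ`, closed under intersection, MKM property. -/
def IsConvexGeometry (𝓕 : Set (Set X)) : Prop :=
  Set.univ ∈ 𝓕 ∧ (∀ F ∈ 𝓕, ∀ G ∈ 𝓕, F ∩ G ∈ 𝓕) ∧
    ∀ A : Set X, closureOf 𝓕 A = closureOf 𝓕 (extPts 𝓕 A)

/-- The full image of a set along `φ`. -/
def fullImage (φ : X → Y) (A : Set X) : Set Y := {y : Y | φ ⁻¹' {y} ⊆ A}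

/- Auxiliary lemmas -/

theorem mem_fullImage {φ : X → Y} {F : Set X} {y : Y} :
    y ∈ fullImage φ F ↔ φ ⁻¹' {y} ⊆ F := Iff.rfl

theorem subset_fullImage_iff {φ : X → Y} {B : Set Y} {F : Set X} :
    B ⊆ fullImage φ F ↔ φ ⁻¹' B ⊆ F := by
  constructor
  · intro h x hx
    exact h hx rfl
  · intro h y hy x hx
    exact h (show x ∈ φ ⁻¹' B by simp only [mem_preimage]; rw [show φ x = y from hx]; exact hy)

theorem fullImage_mono {φ : X → Y} {F G : Set X} (h : F ⊆ G) :
    fullImage φ F ⊆ fullImage φ G :=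
  fun _ hy => hy.trans h

theorem subset_closureOf (𝓕 : Set (Set X)) (A : Set X) : A ⊆ closureOf 𝓕 A :=
  fun _ ha => fun _ hF => hF.2 ha

theorem closureOf_mono (𝓕 : Set (Set X)) {A B : Set X} (h : A ⊆ B) :
    closureOf 𝓕 A ⊆ closureOf 𝓕 B := by
  apply sInter_subset_sInter
  intro F hF
  exact ⟨hF.1, h.trans hF.2⟩

theorem closureOf_fullImage (φ : X → Y) (𝓕 : Set (Set X)) (B : Set Y) :
    closureOf {C : Set Y | ∃ F ∈ 𝓕, C = fullImage φ F} B
      = fullImage φ (closureOf 𝓕 (φ ⁻¹' B)) := by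
  ext y
  constructor
  · intro hy x hx
    rw [closureOf, mem_sInter] at hy
    rw [closureOf, mem_sInter]
    intro F hF
    have : y ∈ fullImage φ F := hy _ ⟨⟨F, hF.1, rfl⟩, subset_fullImage_iff.mpr hF.2⟩
    exact this hx
  · intro hy G hG
    obtain ⟨⟨F, hF, rfl⟩, hBG⟩ := hG
    intro x hx
    exact hy hx F ⟨hF, subset_fullImage_iff.mp hBG⟩

/-- the direct image of a convex geometry under the full-image operation
is a convex geometry, and extreme points are computed fiberwise. -/
theorem convexGeometry_direct_image {X Y : Type*} [Fintype X] [Fintype Y]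
    (φ : X → Y) (𝓕 : Set (Set X)) (h𝓕 : IsConvexGeometry 𝓕) :
    IsConvexGeometry {B : Set Y | ∃ F ∈ 𝓕, B = fullImage φ F} ∧
      ∀ B : Set Y,
        extPts {B : Set Y | ∃ F ∈ 𝓕, B = fullImage φ F} B =
          φ '' extPts 𝓕 (φ ⁻¹' B) := by
  obtain ⟨huniv, hinter, hmkm⟩ := h𝓕
  set 𝓖 : Set (Set Y) := {B : Set Y | ∃ F ∈ 𝓕, B = fullImage φ F} with h𝓖
  -- the extreme-point formula
  have hext : ∀ B : Set Y, extPts 𝓖 B = φ '' extPts 𝓕 (φ ⁻¹' B) := by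
    intro B
    set A := φ ⁻¹' B with hA
    ext y
    constructor
    · rintro ⟨hyB, hy⟩
      rw [closureOf_fullImage] at hy
      rw [mem_fullImage] at hy
      rw [Set.not_subset] at hy
      obtain ⟨x, hxy, hx⟩ := hy
      have hxy : φ x = y := hxy
      have hpre : φ ⁻¹' (B \ {y}) = A \ φ ⁻¹' {y} := by
        ext z; simp [hA, mem_preimage]
      rw [hpre] at hx
      -- find an extreme point of A in the fiber over y
      by_contra hne
      have hsub : extPts 𝓕 A ⊆ A \ φ ⁻¹' {y} := by
        intro z hz
        refine ⟨hz.1, ?_⟩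
        intro hzy
        exact hne ⟨z, hz, hzy⟩
      have : x ∈ closureOf 𝓕 (A \ φ ⁻¹' {y}) := by
        have hxA : x ∈ A := by rw [hA, mem_preimage, hxy]; exact hyB
        have h1 : x ∈ closureOf 𝓕 A := subset_closureOf 𝓕 A hxA
        rw [hmkm A] at h1
        exact closureOf_mono 𝓕 hsub h1
      exact hx this
    · rintro ⟨x, ⟨hxA, hx⟩, hxy⟩
      refine ⟨by rw [← hxy]; exact hxA, ?_⟩
      rw [closureOf_fullImage, mem_fullImage]
      intro h
      apply hx
      have hpre : φ ⁻¹' (B \ {y}) = A \ φ ⁻¹' {y} := by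
        ext z; simp [hA, mem_preimage]
      have hxmem : x ∈ closureOf 𝓕 (φ ⁻¹' (B \ {y})) := h hxy
      rw [hpre] at hxmem
      refine closureOf_mono 𝓕 ?_ hxmem
      intro z hz
      refine ⟨hz.1, ?_⟩
      intro hzx
      apply hz.2
      rw [mem_preimage, show z = x from hzx, hxy]
      rfl
  refine ⟨⟨⟨univ, huniv, ?_⟩, ?_, ?_⟩, hext⟩
  · ext y; simp [mem_fullImage]
  · rintro _ ⟨F, hF, rfl⟩ _ ⟨G, hG, rfl⟩
    refine ⟨F ∩ G, hinter F hF G hG, ?_⟩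
    ext y; simp only [mem_inter_iff, mem_fullImage, subset_inter_iff]
  · intro B
    apply Subset.antisymm
    · rw [closureOf_fullImage, closureOf_fullImage, hext]
      apply fullImage_mono
      have h1 : extPts 𝓕 (φ ⁻¹' B) ⊆ φ ⁻¹' (φ '' extPts 𝓕 (φ ⁻¹' B)) :=
        subset_preimage_image φ _
      calc closureOf 𝓕 (φ ⁻¹' B) = closureOf 𝓕 (extPts 𝓕 (φ ⁻¹' B)) := hmkm _
        _ ⊆ _ := closureOf_mono 𝓕 h1
    · apply closureOf_mono
      intro y hy
      exact hy.1
end
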